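/- arXiv:1512.01348 — 2 statements merged into one kernel-verified Lean document; each statement's English description precedes it below -/
import Mathlib

section
/- Let h be a positive integer and let G be an entropy-minimal finite simple graph with H(G) strictly between h−1 and h. If M is the set of vertices covered by a maximum matching of G and |M| = 2m, then h ≤ 2m ≤ 2(h−1). -/
noncomputable section

/-- `g : [q]^V → [q]` depends essentially on coordinate `u`: there exist two inputs that
differ only at coordinate `u` on which `g` takes different values. -/
def EssDependsOn {V : Type*} {q : ℕ} (g : (V → Fin q) → Fin q) (u : V) : Prop :=
  ∃ a b : V → Fin q, (∀ w, w ≠ u → a w = b w) ∧ g a ≠ g b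

/-- The interaction graph of `f` is contained in the simple graph `G`
(viewed as the symmetric loopless digraph with arcs `(u,v)` and `(v,u)` for every edge `uv`). -/
def IGLe {V : Type*} {q : ℕ} (G : SimpleGraph V) (f : (V → Fin q) → (V → Fin q)) : Prop :=
  ∀ u v : V, EssDependsOn (fun x => f x v) u → G.Adj u v

/-- The `q`-ary guessing number of a simple graph `G`: the maximum of `log_q |Fix(f)|`
over all `f` whose interaction graph is contained in `G`. -/
def guessing {V : Type*} (G : SimpleGraph V) (q : ℕ) : ℝ :=
  sSup {x : ℝ | ∃ f : (V → Fin q) → (V → Fin q),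
    IGLe G f ∧ x = Real.logb q (Set.ncard {p : V → Fin q | f p = p})}

/-- The entropy of a simple graph: the supremum over `q ≥ 2` of its `q`-guessing numbers. -/
def graphEntropy {V : Type*} (G : SimpleGraph V) : ℝ :=
  sSup {x : ℝ | ∃ q : ℕ, 2 ≤ q ∧ x = guessing G q}

/-- The set of all entropies of finite simple graphs. -/
def entropySet : Set ℝ := {x : ℝ | ∃ (n : ℕ) (G : SimpleGraph (Fin n)), graphEntropy G = x}

/-- A finite simple graph is entropy-minimal if no simple graph with fewer vertices has the same
fractional part of the entropy. -/
def EntropyMinimal {n : ℕ} (G : SimpleGraph (Fin n)) : Prop :=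
  ∀ m : ℕ, m < n → ∀ G' : SimpleGraph (Fin m),
    Int.fract (graphEntropy G') ≠ Int.fract (graphEntropy G)



/-!
The vertex set of a maximum matching is a vertex cover, and a fixed point of any `f` with
interaction graph in `G` is determined by its values on a vertex cover; hence `H(G) ≤ 2m`.
Conversely, if every matched vertex copies its partner's value, the fixed points are the
labellings constant on each matching edge and `0` elsewhere, so `g(G, 2) ≥ m`. Combined with
`h - 1 < H(G) < h`, the bounds `m ≤ H(G) ≤ 2m` give `h ≤ 2m` and `m ≤ h - 1`.
-/

open SimpleGraph

section Dependence

variable {V : Type*} [Finite V] {q : ℕ}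

theorem eq_of_forall_essDependsOn (g : (V → Fin q) → Fin q) {x y : V → Fin q}
    (h : ∀ u, EssDependsOn g u → x u = y u) : g x = g y := by
  classical
  have := Fintype.ofFinite V
  suffices ∀ (s : Finset V) (x : V → Fin q), (∀ u ∉ s, x u = y u) →
      (∀ u, EssDependsOn g u → x u = y u) → g x = g y from
    this Finset.univ x (by simp) h
  intro s
  induction s using Finset.induction_on with
  | empty => exact fun x hxy _ => congrArg g (funext fun u => hxy u (Finset.notMem_empty u))
  | @insert a s _ ih =>
    intro x hxy hdep
    set x' := Function.update x a (y a)
    have hx' : g x = g x' := by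
      by_cases ha : EssDependsOn g a
      · rw [show x' = x from Function.update_eq_self_iff.mpr (hdep a ha).symm]
      · by_contra hne
        exact ha ⟨x, x', fun w hw => (Function.update_of_ne hw _ _).symm, hne⟩
    have hx'y : ∀ u, (u ≠ a → x u = y u) → x' u = y u := fun u hu => by
      rcases eq_or_ne u a with rfl | hua
      · exact Function.update_self _ _ _
      · exact (Function.update_of_ne hua _ _).trans (hu hua)
    exact hx'.trans (ih x' (fun u hu => hx'y u fun hua => hxy u (by simp [hua, hu]))
      (fun u hu => hx'y u fun _ => hdep u hu))

end Dependence

section Guessing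

variable {V : Type*} {G : SimpleGraph V} {q : ℕ}

theorem iGLe_const (c : V → Fin q) : IGLe G fun _ => c :=
  fun _ _ ⟨_, _, _, hne⟩ => absurd rfl hne

variable [Finite V]

/-- Outside the vertex cover `S`, every vertex only sees vertices of `S`, so a fixed point is
determined by its restriction to `S`. -/
theorem ncard_fixedPoints_le {S : Set V} (hS : G.IsVertexCover S)
    {f : (V → Fin q) → V → Fin q} (hf : IGLe G f) :
    {p | f p = p}.ncard ≤ q ^ S.ncard := by
  have hinj : Function.Injective fun (p : {p | f p = p}) (s : S) => (p : V → Fin q) s := by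
    rintro ⟨p₁, hp₁⟩ ⟨p₂, hp₂⟩ hagree
    refine Subtype.ext (funext fun v => ?_)
    by_cases hv : v ∈ S
    · exact congrFun hagree ⟨v, hv⟩
    · have hfv : f p₁ v = f p₂ v := eq_of_forall_essDependsOn (fun x => f x v) fun u hu =>
        congrFun hagree ⟨u, (hS (hf u v hu)).resolve_right hv⟩
      rwa [hp₁, hp₂] at hfv
  calc {p | f p = p}.ncard = Nat.card {p | f p = p} := (Nat.card_coe_set_eq _).symm
    _ ≤ Nat.card (S → Fin q) := Nat.card_le_card_of_injective _ hinj
    _ = q ^ S.ncard := by rw [Nat.card_fun, Nat.card_coe_set_eq, Nat.card_eq_fintype_card,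
        Fintype.card_fin]

theorem logb_ncard_fixedPoints_le (hq : 1 < q) {S : Set V} (hS : G.IsVertexCover S)
    {f : (V → Fin q) → V → Fin q} (hf : IGLe G f) :
    Real.logb q {p | f p = p}.ncard ≤ S.ncard := by
  have hfix : ({p | f p = p}.ncard : ℝ) ≤ (q : ℝ) ^ (S.ncard : ℝ) := by
    rw [Real.rpow_natCast]; exact_mod_cast ncard_fixedPoints_le hS hf
  rcases Nat.eq_zero_or_pos {p | f p = p}.ncard with h0 | hpos
  · simp [h0]
  · exact (Real.logb_le_iff_le_rpow (by exact_mod_cast hq) (by exact_mod_cast hpos)).mpr hfix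

theorem guessing_le_ncard_of_isVertexCover (hq : 1 < q) {S : Set V} (hS : G.IsVertexCover S) :
    guessing G q ≤ S.ncard :=
  csSup_le ⟨_, _, iGLe_const fun _ => ⟨0, by omega⟩, rfl⟩ fun _ ⟨_, hf, hx⟩ =>
    hx ▸ logb_ncard_fixedPoints_le hq hS hf

theorem bddAbove_guessing (hq : 1 < q) :
    BddAbove {x : ℝ | ∃ f : (V → Fin q) → V → Fin q,
      IGLe G f ∧ x = Real.logb q {p | f p = p}.ncard} :=
  ⟨_, fun _ ⟨_, hf, hx⟩ => hx ▸ logb_ncard_fixedPoints_le hq isVertexCover_univ hf⟩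

theorem graphEntropy_le_ncard_of_isVertexCover {S : Set V} (hS : G.IsVertexCover S) :
    graphEntropy G ≤ S.ncard :=
  csSup_le ⟨_, 2, le_rfl, rfl⟩ fun _ ⟨_, hq, hx⟩ =>
    hx ▸ guessing_le_ncard_of_isVertexCover hq hS

theorem guessing_le_graphEntropy (hq : 1 < q) : guessing G q ≤ graphEntropy G :=
  le_csSup
    ⟨_, fun _ ⟨_, hq', hx⟩ => hx ▸ guessing_le_ncard_of_isVertexCover hq' isVertexCover_univ⟩
    ⟨q, hq, rfl⟩

end Guessing

namespace SimpleGraph.Subgraph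

variable {V : Type*} {G : SimpleGraph V} {M : G.Subgraph}

theorem IsMatching.ncard_verts_eq_two_mul_ncard_edgeSet [Finite V] (hM : M.IsMatching) :
    M.verts.ncard = 2 * M.edgeSet.ncard := by
  have := Fintype.ofFinite M.edgeSet
  have hfiber : ∀ e, Nat.card {v // hM.toEdge v = e} = 2 := by
    rintro ⟨e, he⟩
    change Nat.card (hM.toEdge ⁻¹' {⟨e, he⟩}) = 2
    induction e using Sym2.ind with
    | h u v => rw [hM.toEdge_preimage_singleton he, Nat.card_coe_set_eq,
        Set.ncard_pair (Subtype.coe_ne_coe.mp (M.adj_sub he).ne)]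
  rw [← Nat.card_coe_set_eq, ← Nat.card_coe_set_eq M.edgeSet,
    ← Nat.card_congr (Equiv.sigmaFiberEquiv hM.toEdge), Nat.card_sigma,
    Finset.sum_const_nat fun e _ => hfiber e, Finset.card_univ, Nat.card_eq_fintype_card,
    mul_comm]

theorem IsMatching.isVertexCover_verts [Finite V] (hM : M.IsMatching)
    (hmax : ∀ M' : G.Subgraph, M'.IsMatching → M'.verts.ncard ≤ M.verts.ncard) :
    G.IsVertexCover M.verts := by
  intro u v huv
  by_contra! ⟨hu, hv⟩
  have hdisj : Disjoint M.verts (G.subgraphOfAdj huv).verts := by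
    simp [subgraphOfAdj_verts, hu, hv]
  have hsup : (M ⊔ G.subgraphOfAdj huv).IsMatching := by
    refine hM.sup (.subgraphOfAdj huv) ?_
    rwa [hM.support_eq_verts, IsMatching.support_eq_verts (.subgraphOfAdj huv)]
  have hcard := hmax _ hsup
  rw [verts_sup, Set.ncard_union_eq hdisj, subgraphOfAdj_verts, Set.ncard_pair huv.ne] at hcard
  omega

section PartnerCopy

variable {q : ℕ} [NeZero q]

open Classical in
def IsMatching.partnerCopy (hM : M.IsMatching) (x : V → Fin q) (v : V) : Fin q :=
  if hv : v ∈ M.verts then x (hM hv).choose else 0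

theorem IsMatching.partnerCopy_of_adj (hM : M.IsMatching) (x : V → Fin q) {v w : V}
    (hvw : M.Adj v w) : hM.partnerCopy x v = x w := by
  rw [partnerCopy, dif_pos hvw.fst_mem, hM.eq_of_adj_left (hM hvw.fst_mem).choose_spec.1 hvw]

theorem IsMatching.partnerCopy_of_notMem (hM : M.IsMatching) (x : V → Fin q) {v : V}
    (hv : v ∉ M.verts) : hM.partnerCopy x v = 0 := by
  rw [partnerCopy, dif_neg hv]

theorem IsMatching.iGLe_partnerCopy (hM : M.IsMatching) : IGLe G (hM.partnerCopy (q := q)) := by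
  rintro u v ⟨a, b, hab, hne⟩
  by_cases hv : v ∈ M.verts
  · obtain ⟨w, hvw, -⟩ := hM hv
    simp only [hM.partnerCopy_of_adj _ hvw] at hne
    obtain rfl : u = w := by
      by_contra huw
      exact hne (hab w (Ne.symm huw))
    exact (M.adj_sub hvw).symm
  · simp only [hM.partnerCopy_of_notMem _ hv] at hne
    exact absurd rfl hne

/-- Labelling each edge of the matching gives a fixed point of `partnerCopy`. -/
theorem IsMatching.pow_ncard_edgeSet_le_ncard_fixedPoints [Finite V] (hM : M.IsMatching) :
    q ^ M.edgeSet.ncard ≤ {p : V → Fin q | hM.partnerCopy p = p}.ncard := by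
  classical
  let label (y : M.edgeSet → Fin q) (v : V) : Fin q :=
    if hv : v ∈ M.verts then y (hM.toEdge ⟨v, hv⟩) else 0
  have hfix : ∀ y, hM.partnerCopy (label y) = label y := by
    intro y
    funext v
    by_cases hv : v ∈ M.verts
    · obtain ⟨w, hvw, -⟩ := hM hv
      rw [hM.partnerCopy_of_adj _ hvw]
      simp only [label, dif_pos hv, dif_pos hvw.snd_mem, hM.toEdge_eq_toEdge_of_adj hvw]
    · simp only [hM.partnerCopy_of_notMem _ hv, label, dif_neg hv]
  have hinj : Function.Injective fun y => (⟨label y, hfix y⟩ : {p | hM.partnerCopy p = p}) := by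
    intro y₁ y₂ hy
    funext e
    obtain ⟨⟨v, hv⟩, rfl⟩ := IsMatching.toEdge.surjective hM e
    simpa [label, hv] using congrFun (congrArg Subtype.val hy) v
  calc q ^ M.edgeSet.ncard = Nat.card (M.edgeSet → Fin q) := by
        rw [Nat.card_fun, Nat.card_coe_set_eq, Nat.card_eq_fintype_card, Fintype.card_fin]
    _ ≤ Nat.card {p | hM.partnerCopy p = p} := Nat.card_le_card_of_injective _ hinj
    _ = {p | hM.partnerCopy p = p}.ncard := Nat.card_coe_set_eq _

end PartnerCopy

theorem IsMatching.ncard_edgeSet_le_guessing [Finite V] (hM : M.IsMatching) {q : ℕ}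
    (hq : 1 < q) : (M.edgeSet.ncard : ℝ) ≤ guessing G q := by
  have : NeZero q := ⟨by omega⟩
  have hfix := hM.pow_ncard_edgeSet_le_ncard_fixedPoints (q := q)
  refine le_trans ?_ (le_csSup (bddAbove_guessing hq) ⟨_, hM.iGLe_partnerCopy, rfl⟩)
  rw [Real.le_logb_iff_rpow_le (by exact_mod_cast hq)
    (by exact_mod_cast (Nat.one_le_pow _ _ (by omega)).trans hfix), Real.rpow_natCast]
  exact_mod_cast hfix

end SimpleGraph.Subgraph

theorem entropyMinimal_matching_size_bounds_general {n : ℕ} (h : ℕ)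
    (G : SimpleGraph (Fin n))
    (h1 : (h : ℝ) - 1 < graphEntropy G) (h2 : graphEntropy G < (h : ℝ))
    (M : G.Subgraph) (hM : M.IsMatching)
    (hmax : ∀ M' : G.Subgraph, M'.IsMatching → M'.verts.ncard ≤ M.verts.ncard)
    (m : ℕ) (hm : M.verts.ncard = 2 * m) :
    h ≤ 2 * m ∧ 2 * m ≤ 2 * (h - 1) := by
  have hupper : graphEntropy G ≤ (2 * m : ℕ) :=
    hm ▸ graphEntropy_le_ncard_of_isVertexCover (hM.isVertexCover_verts hmax)
  have hedges : M.edgeSet.ncard = m := by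
    have := hM.ncard_verts_eq_two_mul_ncard_edgeSet
    omega
  have hlower : (m : ℝ) ≤ graphEntropy G :=
    hedges ▸ (hM.ncard_edgeSet_le_guessing one_lt_two).trans (guessing_le_graphEntropy one_lt_two)
  have hh : h < 2 * m + 1 := by
    push_cast at hupper
    exact_mod_cast (by linarith : (h : ℝ) < 2 * m + 1)
  have hmh : m < h := by exact_mod_cast hlower.trans_lt h2
  omega

/-- If `G` is entropy-minimal with `h - 1 < H(G) < h`, and `M` is (the vertex set of) a
maximum matching of `G` with `|M| = 2m`, then `h ≤ 2m ≤ 2(h-1)`. -/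
theorem entropyMinimal_matching_size_bounds {n : ℕ} (h : ℕ) (hh : 0 < h)
    (G : SimpleGraph (Fin n)) (hmin : EntropyMinimal G)
    (h1 : (h : ℝ) - 1 < graphEntropy G) (h2 : graphEntropy G < (h : ℝ))
    (M : G.Subgraph) (hM : M.IsMatching)
    (hmax : ∀ M' : G.Subgraph, M'.IsMatching → M'.verts.ncard ≤ M.verts.ncard)
    (m : ℕ) (hm : M.verts.ncard = 2 * m) :
    h ≤ 2 * m ∧ 2 * m ≤ 2 * (h - 1) :=
  entropyMinimal_matching_size_bounds_general h G h1 h2 M hM hmax m hm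

end
end

section
/- Let G be a simple graph on six vertices v₁,…,v₆ such that the subgraph induced on {v₁,…,v₅} is the 5-cycle v₁v₂v₃v₄v₅ and every edge of G not inside {v₁,…,v₅} is incident to v₆. Then: H(G) = 5/2 if v₆ is isolated; H(G) = 7/2 if the neighbourhood of v₆ contains three consecutive vertices of the 5-cycle; and H(G) = 3 otherwise. -/
noncomputable section

/-!
The fixed points of a function whose interaction graph lies in `G` form a set `S` of
configurations in which every coordinate is determined by its neighbouring coordinates, so upper
bounds on the guessing number are bounds on `|S|`. An independent set `I` gives
`|S| ≤ q ^ (n - |I|)`; for the pentagon a Cauchy–Schwarz argument gives `|S| ^ 2 ≤ q ^ 5`, and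
slicing along the value of the apex gives `q ^ (7/2)`, or `q ^ (5/2)` for an isolated apex.
Lower bounds come from fractional clique covers: write each letter as `k` digits, cover the digits
by `m` cliques and let every digit be minus the sum of the other digits of its clique; this has
`|A| ^ (nk - m)` fixed points, i.e. guessing number `n - m/k`. The pentagon's edges cover it twice
(`5/2` with two singletons for an isolated apex, `7/2` when the apex turns two consecutive edges
into triangles), and a perfect matching through the apex gives `3`.
-/

open Finset

variable {V α : Type*}

def IsLocallyDetermined (G : SimpleGraph V) (S : Finset (V → α)) : Prop :=
  ∀ v, ∀ x ∈ S, ∀ y ∈ S, (∀ u, G.Adj u v → x u = y u) → x v = y v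

section Interaction

variable [Fintype V] [DecidableEq V] {q : ℕ} {G : SimpleGraph V}

theorem igLe_iff {f : (V → Fin q) → V → Fin q} :
    IGLe G f ↔ ∀ v a b, (∀ u, G.Adj u v → a u = b u) → f a v = f b v := by
  constructor
  · intro hf v a b hab
    suffices key : ∀ s : Finset V, ∀ a, (∀ u ∉ s, a u = b u) → (∀ u, G.Adj u v → a u = b u) →
        f a v = f b v from key univ a (by simp) hab
    intro s
    induction s using Finset.induction_on with
    | empty => intro a ha _; rw [funext fun u => ha u (notMem_empty u)]
    | insert w s hw ih =>
      intro a ha hadj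
      have hupd : f a v = f (Function.update a w (b w)) v := by
        by_cases hwv : G.Adj w v
        · rw [Function.update_eq_self_iff.2 (hadj w hwv).symm]
        · by_contra hne
          exact hwv (hf w v ⟨a, _, fun u hu => (Function.update_of_ne hu _ _).symm, hne⟩)
      rw [hupd]
      refine ih _ (fun u hu => ?_) (fun u hu => ?_) <;> rcases eq_or_ne u w with rfl | huw
      · simp
      · rw [Function.update_of_ne huw]; exact ha u (by simp [huw, hu])
      · simp
      · rw [Function.update_of_ne huw]; exact hadj u hu
  · rintro h u v ⟨a, b, hab, hne⟩
    by_contra huv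
    exact hne (h v a b fun w hw => hab w (by rintro rfl; exact huv hw))

theorem IGLe.isLocallyDetermined {f : (V → Fin q) → V → Fin q} (hf : IGLe G f) :
    IsLocallyDetermined G {x | f x = x} := by
  intro v x hx y hy hxy
  simp only [mem_filter, mem_univ, true_and] at hx hy
  rw [← hx, ← hy]
  exact igLe_iff.1 hf v x y hxy

end Interaction

section Guessing

variable [Fintype V] [DecidableEq V] {q k m : ℕ} {G : SimpleGraph V}

theorem logb_le_div_of_pow_le {n : ℕ} (hq : 2 ≤ q) (hk : 0 < k) (h : n ^ k ≤ q ^ m) :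
    Real.logb q n ≤ m / k := by
  rcases Nat.eq_zero_or_pos n with rfl | hn
  · simp only [Nat.cast_zero, Real.logb_zero]; positivity
  have hq' : (1 : ℝ) < q := by exact_mod_cast hq
  rw [Real.logb, div_le_div_iff₀ (Real.log_pos hq') (by positivity), mul_comm, ← Real.log_pow,
    ← Real.log_pow, Real.log_le_log_iff (by positivity) (by positivity)]
  exact_mod_cast h

theorem div_le_logb_of_le_pow {n : ℕ} (hq : 2 ≤ q) (hk : 0 < k) (h : q ^ m ≤ n ^ k) :
    (m / k : ℝ) ≤ Real.logb q n := by
  have hq' : (1 : ℝ) < q := by exact_mod_cast hq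
  have hn : 0 < n := Nat.pos_of_ne_zero fun hn => by
    subst hn; simp [zero_pow hk.ne'] at h; omega
  rw [Real.logb, div_le_div_iff₀ (by positivity) (Real.log_pos hq'), mul_comm (Real.log n),
    ← Real.log_pow, ← Real.log_pow, Real.log_le_log_iff (by positivity) (by positivity)]
  exact_mod_cast h

theorem ncard_fixedPoints_eq (f : (V → Fin q) → V → Fin q) :
    Set.ncard {x | f x = x} = #{x | f x = x} := by
  rw [← Set.ncard_coe_finset, coe_filter_univ]

theorem guessing_le_of_forall_card_pow_le (hq : 2 ≤ q) (hk : 0 < k)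
    (h : ∀ S : Finset (V → Fin q), IsLocallyDetermined G S → #S ^ k ≤ q ^ m) :
    guessing G q ≤ m / k := by
  refine Real.sSup_le ?_ (by positivity)
  rintro _ ⟨f, hf, rfl⟩
  rw [ncard_fixedPoints_eq]
  exact logb_le_div_of_pow_le hq hk (h _ hf.isLocallyDetermined)

theorem le_guessing_of_pow_le_card (hq : 2 ≤ q) (hk : 0 < k) {f : (V → Fin q) → V → Fin q}
    (hf : IGLe G f) (h : q ^ m ≤ #{x | f x = x} ^ k) : (m / k : ℝ) ≤ guessing G q := by
  have hbdd : BddAbove {x : ℝ | ∃ f : (V → Fin q) → V → Fin q,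
      IGLe G f ∧ x = Real.logb q (Set.ncard {p | f p = p})} := by
    refine ⟨Fintype.card V, ?_⟩
    rintro _ ⟨g, -, rfl⟩
    have hcard : #{x | g x = x} ^ 1 ≤ q ^ Fintype.card V := by
      simpa using card_le_univ (α := V → Fin q) _
    simpa [ncard_fixedPoints_eq] using logb_le_div_of_pow_le hq one_pos hcard
  refine (div_le_logb_of_le_pow hq hk h).trans (le_csSup hbdd ⟨f, hf, ?_⟩)
  rw [ncard_fixedPoints_eq]

end Guessing

theorem graphEntropy_eq_of_guessing {G : SimpleGraph V} {c : ℝ} {q₀ : ℕ} (hq₀ : 2 ≤ q₀)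
    (hle : ∀ q, 2 ≤ q → guessing G q ≤ c) (hge : c ≤ guessing G q₀) : graphEntropy G = c := by
  have hbdd : BddAbove {x | ∃ q : ℕ, 2 ≤ q ∧ x = guessing G q} :=
    ⟨c, by rintro _ ⟨q, hq, rfl⟩; exact hle q hq⟩
  refine le_antisymm (csSup_le ⟨_, q₀, hq₀, rfl⟩ ?_) (hge.trans (le_csSup hbdd ⟨q₀, hq₀, rfl⟩))
  rintro _ ⟨q, hq, rfl⟩
  exact hle q hq

section UpperBounds

open SimpleGraph

theorem IsLocallyDetermined.card_le_of_isIndepSet [Fintype V] [DecidableEq V] [Fintype α]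
    {G : SimpleGraph V} {S : Finset (V → α)} (hS : IsLocallyDetermined G S) {s : Finset V}
    (hs : G.IsIndepSet s) :
    #S ≤ Fintype.card α ^ #sᶜ := by
  have hinj : Set.InjOn (fun (x : V → α) (v : ↥sᶜ) => x v) (S : Set (V → α)) := by
    intro x hx y hy hxy
    funext v
    by_cases hv : v ∈ s
    · refine hS v x hx y hy fun u huv => ?_
      have hu : u ∉ s := fun hu => hs hu hv (G.ne_of_adj huv) huv
      exact congrFun hxy ⟨u, mem_compl.2 hu⟩
    · exact congrFun hxy ⟨v, mem_compl.2 hv⟩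
  simpa [card_compl] using card_le_card_of_injOn _ (fun _ _ => mem_univ _) hinj

theorem sum_card_image_filter_le {γ β δ : Type*} [DecidableEq β] [Fintype δ] [DecidableEq δ]
    (S : Finset γ) (φ : γ → β) (ψ : γ → δ) (h : ∀ x ∈ S, ∀ y ∈ S, ψ x = ψ y → φ x = φ y)
    (t : Finset β) : ∑ b ∈ t, #({x ∈ S | φ x = b}.image ψ) ≤ Fintype.card δ := by
  rw [← card_biUnion]
  · exact card_le_univ _
  intro b _ b' _ hbb'
  simp only [Function.onFun, Finset.disjoint_left, mem_image, mem_filter]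
  rintro _ ⟨x, ⟨hx, rfl⟩, rfl⟩ ⟨y, ⟨hy, rfl⟩, hxy⟩
  exact hbb' (h y hy x hx hxy).symm

theorem IsLocallyDetermined.eq_of_cycleGraph {n : ℕ} {S : Finset (Fin (n + 2) → α)}
    (hS : IsLocallyDetermined (cycleGraph (n + 2)) S) {i : Fin (n + 2)} {x y : Fin (n + 2) → α}
    (hx : x ∈ S) (hy : y ∈ S) (h₁ : x (i - 1) = y (i - 1)) (h₂ : x (i + 1) = y (i + 1)) :
    x i = y i := by
  refine hS i x hx y hy fun u hu => ?_
  rcases cycleGraph_adj.1 hu with h | h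
  · obtain rfl : u = i + 1 := by rw [← h, add_sub_cancel]
    exact h₂
  · obtain rfl : u = i - 1 := by rw [← h, sub_sub_cancel]
    exact h₁

/-- On a set where `(x₂, x₃)` is constant, both `x₀` and `(x₁, x₄)` determine the point. -/
theorem IsLocallyDetermined.card_fiber_sq_le_of_cycleGraph_five [Fintype α] [DecidableEq α]
    {S F : Finset (Fin 5 → α)} (hS : IsLocallyDetermined (cycleGraph 5) S) (hF : F ⊆ S)
    (h23 : ∀ x ∈ F, ∀ y ∈ F, x 2 = y 2 ∧ x 3 = y 3) :
    #F ^ 2 ≤ Fintype.card α * (#(F.image (· 1)) * #(F.image (· 4))) := by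
  have hext : ∀ x y : Fin 5 → α, x 0 = y 0 → x 1 = y 1 → x 2 = y 2 → x 3 = y 3 → x 4 = y 4 →
      x = y := by
    intro x y h0 h1 h2 h3 h4
    funext i
    fin_cases i <;> assumption
  have h0 : #F ≤ Fintype.card α := by
    refine (card_le_card_of_injOn (· 0) (fun _ _ => mem_univ _) fun x hx y hy h0 => ?_).trans_eq
      card_univ
    obtain ⟨h2, h3⟩ := h23 x hx y hy
    have h1 : x 1 = y 1 := hS.eq_of_cycleGraph (i := 1) (hF hx) (hF hy) h0 h2
    exact hext x y h0 h1 h2 h3 (hS.eq_of_cycleGraph (i := 4) (hF hx) (hF hy) h3 h0)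
  have h14 : #F ≤ #(F.image (· 1)) * #(F.image (· 4)) := by
    rw [← card_product]
    refine card_le_card_of_injOn (fun x => (x 1, x 4))
      (fun x hx => mem_product.2 ⟨mem_image_of_mem _ hx, mem_image_of_mem _ hx⟩)
      fun x hx y hy h14 => ?_
    obtain ⟨h1, h4⟩ := Prod.ext_iff.1 h14
    obtain ⟨h2, h3⟩ := h23 x hx y hy
    exact hext x y (hS.eq_of_cycleGraph (i := 0) (hF hx) (hF hy) h4 h1) h1 h2 h3 h4
  rw [sq]
  exact Nat.mul_le_mul h0 h14

/-- Summing the previous bound over the fibres of `(x₂, x₃)` with Cauchy–Schwarz: for fixed `x₃`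
the sets of values of `x₁` on the fibres are disjoint, since `x₁` and `x₃` determine `x₂`, and
symmetrically for `x₄`. -/
theorem IsLocallyDetermined.card_sq_le_of_cycleGraph_five [Fintype α] [DecidableEq α]
    {S : Finset (Fin 5 → α)} (hS : IsLocallyDetermined (cycleGraph 5) S) :
    #S ^ 2 ≤ Fintype.card α ^ 5 := by
  set q := Fintype.card α
  let F : α × α → Finset (Fin 5 → α) := fun p => {x ∈ S | x 2 = p.1 ∧ x 3 = p.2}
  have hfiber : ∀ p, #(F p) ^ 2 ≤ q * #((F p).image (· 1)) * #((F p).image (· 4)) := fun p => by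
    rw [mul_assoc]
    refine hS.card_fiber_sq_le_of_cycleGraph_five (filter_subset _ _) fun x hx y hy => ?_
    obtain ⟨-, hx2, hx3⟩ := mem_filter.1 hx
    obtain ⟨-, hy2, hy3⟩ := mem_filter.1 hy
    exact ⟨hx2.trans hy2.symm, hx3.trans hy3.symm⟩
  have hcard : #S = ∑ p, #(F p) := by
    rw [card_eq_sum_card_fiberwise (f := fun x => (x 2, x 3)) (t := univ) fun _ _ => mem_univ _]
    simp only [F, Prod.ext_iff]
  have hsum₁ : ∑ p, #((F p).image (· 1)) ≤ q ^ 2 := by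
    rw [Fintype.sum_prod_type_right]
    refine (sum_le_sum (g := fun _ => q) fun b _ => ?_).trans (by simp [q, sq])
    have h := sum_card_image_filter_le {x ∈ S | x 3 = b} (· 2) (· 1)
      (fun x hx y hy h1 => hS.eq_of_cycleGraph (i := 2) (mem_filter.1 hx).1 (mem_filter.1 hy).1 h1
        ((mem_filter.1 hx).2.trans (mem_filter.1 hy).2.symm)) univ
    simpa only [F, filter_filter, and_comm] using h
  have hsum₄ : ∑ p, #((F p).image (· 4)) ≤ q ^ 2 := by
    rw [Fintype.sum_prod_type]
    refine (sum_le_sum (g := fun _ => q) fun a _ => ?_).trans (by simp [q, sq])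
    have h := sum_card_image_filter_le {x ∈ S | x 2 = a} (· 3) (· 4)
      (fun x hx y hy h4 => hS.eq_of_cycleGraph (i := 3) (mem_filter.1 hx).1 (mem_filter.1 hy).1
        ((mem_filter.1 hx).2.trans (mem_filter.1 hy).2.symm) h4) univ
    simpa only [F, filter_filter] using h
  calc #S ^ 2 = (∑ p, #(F p)) ^ 2 := by rw [hcard]
    _ ≤ (∑ p, q * #((F p).image (· 1))) * ∑ p, #((F p).image (· 4)) :=
        sum_sq_le_sum_mul_sum_of_sq_le_mul _ (fun _ _ => Nat.zero_le _)
          (fun _ _ => Nat.zero_le _) fun p _ => hfiber p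
    _ ≤ (q * q ^ 2) * q ^ 2 := by rw [← mul_sum]; gcongr
    _ = q ^ 5 := by ring

end UpperBounds

section CliqueCover

variable {ι A : Type*} {G : SimpleGraph V} {k : ℕ}

/-- `c` gives every vertex `k` slots, and the slots sharing a label form a clique of `G`
(so distinct slots of one vertex get distinct labels): a `k`-fold cover of `V` by cliques. -/
def IsCliqueCover (G : SimpleGraph V) (c : V × Fin k → ι) : Prop :=
  ∀ a b, a ≠ b → c a = c b → G.Adj a.1 b.1

theorem IsCliqueCover.mono {H : SimpleGraph V} {c : V × Fin k → ι} (hc : IsCliqueCover G c)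
    (h : G ≤ H) : IsCliqueCover H c :=
  fun a b hab hcab => h (hc a b hab hcab)

/-- A letter of the alphabet `Fin (|A| ^ k)` is read as `k` digits in `A`. -/
def digitsEquiv [Fintype A] : (V → Fin (Fintype.card A ^ k)) ≃ (V × Fin k → A) :=
  (Equiv.piCongrRight fun _ => (Fintype.equivFinOfCardEq (by simp)).symm).trans
    (Equiv.curry _ _ _).symm

theorem digitsEquiv_apply [Fintype A] (y : V → Fin (Fintype.card A ^ k)) (a : V × Fin k) :
    digitsEquiv y a = (Fintype.equivFinOfCardEq (α := Fin k → A) (by simp)).symm (y a.1) a.2 :=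
  rfl

variable [Fintype V] [DecidableEq ι] [AddCommGroup A]

variable (A) in
def cliqueSum (c : V × Fin k → ι) : (V × Fin k → A) →+ (ι → A) where
  toFun x K := ∑ b with c b = K, x b
  map_zero' := by ext; simp
  map_add' x y := by ext; simp [sum_add_distrib]

theorem card_pow_le_card_ker_mul [Fintype A] (c : V × Fin k → ι) :
    Fintype.card A ^ (Fintype.card V * k) ≤
      Nat.card (cliqueSum A c).ker * Fintype.card A ^ #(univ.image c) := by
  have hrange : Nat.card (cliqueSum A c).range ≤ Fintype.card A ^ #(univ.image c) := by
    have hinj :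
        Function.Injective fun (t : (cliqueSum A c).range) (K : ↥(univ.image c)) => t.1 K := by
      rintro ⟨_, x, rfl⟩ ⟨_, y, rfl⟩ hxy
      ext K
      by_cases hK : K ∈ univ.image c
      · exact congrFun hxy ⟨K, hK⟩
      · have hempty : ∀ x : V × Fin k → A, cliqueSum A c x K = 0 := fun x =>
          sum_eq_zero fun b hb =>
            absurd (mem_image_of_mem c (mem_univ b)) ((mem_filter.1 hb).2 ▸ hK)
        change cliqueSum A c x K = cliqueSum A c y K
        rw [hempty, hempty]
    refine (Nat.card_le_card_of_injective _ hinj).trans_eq ?_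
    rw [Nat.card_eq_fintype_card, Fintype.card_fun, Fintype.card_coe]
  calc Fintype.card A ^ (Fintype.card V * k)
      = Nat.card (cliqueSum A c).ker * (cliqueSum A c).ker.index := by
        rw [AddSubgroup.card_mul_index, Nat.card_fun, Nat.card_prod]
        simp only [Nat.card_eq_fintype_card, Fintype.card_fin]
    _ ≤ _ := by rw [AddSubgroup.index_ker]; gcongr

variable [DecidableEq V]

def cliqueGuess (c : V × Fin k → ι) (x : V × Fin k → A) (a : V × Fin k) : A :=
  -∑ b ∈ ({b | c b = c a} : Finset _).erase a, x b

theorem cliqueGuess_eq_self_iff {c : V × Fin k → ι} {x : V × Fin k → A} :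
    cliqueGuess c x = x ↔ cliqueSum A c x = 0 := by
  have hsum : ∀ a,
      ∑ b with c b = c a, x b = x a + ∑ b ∈ ({b | c b = c a} : Finset _).erase a, x b :=
    fun a => (add_sum_erase _ _ (by simp)).symm
  constructor
  · intro h
    funext K
    by_cases hK : ∃ a, c a = K
    · obtain ⟨a, rfl⟩ := hK
      change ∑ b with c b = c a, x b = 0
      rw [hsum, ← congrFun h a, cliqueGuess, neg_add_cancel]
    · simp only [not_exists] at hK
      exact sum_eq_zero fun b hb => absurd (mem_filter.1 hb).2 (hK b)
  · intro h
    funext a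
    have h0 : ∑ b with c b = c a, x b = 0 := congrFun h (c a)
    rw [hsum] at h0
    exact (eq_neg_of_add_eq_zero_left h0).symm

variable [Fintype A]

variable (A) in
def cliqueStrategy (c : V × Fin k → ι) :
    (V → Fin (Fintype.card A ^ k)) → V → Fin (Fintype.card A ^ k) :=
  fun y => digitsEquiv.symm (cliqueGuess c (digitsEquiv y))

theorem IsCliqueCover.igLe_cliqueStrategy {c : V × Fin k → ι} (hc : IsCliqueCover G c) :
    IGLe G (cliqueStrategy A c) := by
  refine igLe_iff.2 fun v y z hyz => ?_
  have key : ∀ i, cliqueGuess c (digitsEquiv y) (v, i) = cliqueGuess c (digitsEquiv z) (v, i) := by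
    intro i
    refine congrArg Neg.neg (sum_congr rfl fun b hb => ?_)
    obtain ⟨hne, hb⟩ := mem_erase.1 hb
    rw [digitsEquiv_apply, digitsEquiv_apply, hyz b.1 (hc b (v, i) hne (mem_filter.1 hb).2)]
  simp only [cliqueStrategy, digitsEquiv, Equiv.symm_trans_apply, Equiv.symm_symm,
    Equiv.piCongrRight_symm_apply]
  exact congrArg _ (funext key)

theorem card_fixedPoints_cliqueStrategy (c : V × Fin k → ι) :
    #{y | cliqueStrategy A c y = y} = Nat.card (cliqueSum A c).ker := by
  classical
  rw [card_equiv digitsEquiv (t := {x | cliqueSum A c x = 0}), ← Nat.card_eq_finsetCard]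
  · exact Nat.card_congr (Equiv.subtypeEquivRight fun x => by simp)
  · simp [cliqueStrategy, Equiv.symm_apply_eq, cliqueGuess_eq_self_iff]

theorem IsCliqueCover.le_guessing [Nontrivial A] (hk : 0 < k) {c : V × Fin k → ι}
    (hc : IsCliqueCover G c) :
    (Fintype.card V : ℝ) - #(univ.image c) / k ≤ guessing G (Fintype.card A ^ k) := by
  set m := #(univ.image c)
  set n := Fintype.card V
  have hm : m ≤ n * k := card_image_le.trans (by simp [n])
  have hfix : Fintype.card A ^ (n * k - m) ≤ #{y | cliqueStrategy A c y = y} := by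
    have h := card_pow_le_card_ker_mul (A := A) c
    rw [← Nat.sub_add_cancel hm, pow_add] at h
    rw [card_fixedPoints_cliqueStrategy]
    exact Nat.le_of_mul_le_mul_right h (by positivity)
  have hq : 2 ≤ Fintype.card A ^ k :=
    Fintype.one_lt_card.trans_le (Nat.le_self_pow hk.ne' _)
  have h := le_guessing_of_pow_le_card hq hk hc.igLe_cliqueStrategy
    (by rw [← pow_mul, mul_comm, pow_mul]; exact Nat.pow_le_pow_left hfix k)
  convert h using 1
  rw [Nat.cast_sub hm]
  push_cast
  field_simp

end CliqueCover

section Pentagon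

open SimpleGraph

/-- The 5-cycle on `0, …, 4` together with an apex `5` adjacent to the cycle vertices in `N`. -/
def pentagonApex (N : Finset (Fin 5)) : SimpleGraph (Fin 6) where
  Adj u v := (u.val < 5 ∧ v.val < 5 ∧ ((u.val + 1) % 5 = v.val ∨ (v.val + 1) % 5 = u.val)) ∨
    (u = 5 ∧ ∃ i ∈ N, v = i.castSucc) ∨ (v = 5 ∧ ∃ i ∈ N, u = i.castSucc)
  symm := ⟨by
    intro u v
    rintro (⟨hu, hv, h | h⟩ | h | h)
    exacts [Or.inl ⟨hv, hu, Or.inr h⟩, Or.inl ⟨hv, hu, Or.inl h⟩, Or.inr (Or.inr h),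
      Or.inr (Or.inl h)]⟩
  loopless := ⟨by
    intro u
    rintro (⟨-, -, h | h⟩ | ⟨rfl, i, -, hi⟩ | ⟨rfl, i, -, hi⟩)
    · omega
    · omega
    · exact Fin.castSucc_ne_last i hi.symm
    · exact Fin.castSucc_ne_last i hi.symm⟩

instance (N : Finset (Fin 5)) : DecidableRel (pentagonApex N).Adj :=
  fun u v => by unfold pentagonApex; infer_instance

@[simp]
theorem Fin.castSucc_ne_five (i : Fin 5) : (i.castSucc : Fin 6) ≠ 5 :=
  Fin.castSucc_ne_last i

theorem pentagonApex_castSucc_adj_castSucc {N : Finset (Fin 5)} {i j : Fin 5} :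
    (pentagonApex N).Adj i.castSucc j.castSucc ↔ (cycleGraph 5).Adj i j := by
  have hcycle : ∀ i j : Fin 5,
      ((i.val + 1) % 5 = j.val ∨ (j.val + 1) % 5 = i.val) ↔ (cycleGraph 5).Adj i j := by decide
  simp [pentagonApex, hcycle]

theorem pentagonApex_apex_adj_castSucc {N : Finset (Fin 5)} {i : Fin 5} :
    (pentagonApex N).Adj 5 i.castSucc ↔ i ∈ N := by
  simp [pentagonApex]

theorem pentagonApex_castSucc_adj_apex {N : Finset (Fin 5)} {i : Fin 5} :
    (pentagonApex N).Adj i.castSucc 5 ↔ i ∈ N := by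
  rw [adj_comm, pentagonApex_apex_adj_castSucc]

theorem pentagonApex_mono {N M : Finset (Fin 5)} (h : N ⊆ M) :
    pentagonApex N ≤ pentagonApex M := by
  rintro u v (huv | ⟨hu, i, hi, hv⟩ | ⟨hv, i, hi, hu⟩)
  exacts [Or.inl huv, Or.inr (Or.inl ⟨hu, i, h hi, hv⟩), Or.inr (Or.inr ⟨hv, i, h hi, hu⟩)]

theorem eq_pentagonApex {G : SimpleGraph (Fin 6)} [DecidableRel G.Adj]
    (hcycle : ∀ i j : Fin 6, i.val < 5 → j.val < 5 →
      (G.Adj i j ↔ (i.val + 1) % 5 = j.val ∨ (j.val + 1) % 5 = i.val)) :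
    G = pentagonApex {i | G.Adj 5 i.castSucc} := by
  ext u v
  rcases Fin.eq_castSucc_or_eq_last u with ⟨i, rfl⟩ | rfl <;>
    rcases Fin.eq_castSucc_or_eq_last v with ⟨j, rfl⟩ | rfl
  · simp [pentagonApex, hcycle i.castSucc j.castSucc (by simp) (by simp)]
  · change G.Adj _ 5 ↔ (pentagonApex _).Adj _ 5
    simp [G.adj_comm _ 5, pentagonApex_castSucc_adj_apex]
  · change G.Adj 5 _ ↔ (pentagonApex _).Adj 5 _
    simp [pentagonApex_apex_adj_castSucc]
  · simp

/-- Slot `s` of the cycle vertex `v` lies in the edge `{v - 1 + s, v + s}`, labelled `v - 1 + s`;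
the apex slots get the labels `apex s`. -/
def pentagonCover {m : ℕ} (apex : Fin 2 → Fin (m + 5)) : Fin 6 × Fin 2 → Fin (m + 5) :=
  fun a => if a.1.val < 5 then ⟨(a.1.val + 4 + a.2.val) % 5, by omega⟩ else apex a.2

/-- The apex alone in two singleton cliques. -/
def isolatedApexCover : Fin 6 × Fin 2 → Fin 7 := pentagonCover fun s => ⟨5 + s.val, by omega⟩

/-- The apex joins the edges `{i, i + 1}` and `{i + 1, i + 2}`, making them triangles. -/
def triangleCover (i : Fin 5) : Fin 6 × Fin 2 → Fin 5 :=
  pentagonCover fun s => i + ⟨s.val, by omega⟩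

/-- The perfect matching `{5, j}, {j + 1, j + 2}, {j + 3, j + 4}`. -/
def matchingCover (j : Fin 5) : Fin 6 × Fin 1 → Fin 3 :=
  fun a => if a.1.val < 5 then ⟨((a.1.val + 5 - j.val) % 5 + 1) / 2, by omega⟩ else 0

theorem isCliqueCover_isolatedApexCover : IsCliqueCover (pentagonApex ∅) isolatedApexCover := by
  unfold IsCliqueCover; decide

theorem isCliqueCover_triangleCover (i : Fin 5) :
    IsCliqueCover (pentagonApex {i, i + 1, i + 2}) (triangleCover i) := by
  revert i; unfold IsCliqueCover; decide

theorem isCliqueCover_matchingCover (j : Fin 5) :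
    IsCliqueCover (pentagonApex {j}) (matchingCover j) := by
  revert j; unfold IsCliqueCover; decide

variable [Fintype α] [DecidableEq α] {N : Finset (Fin 5)}

/-- Fixing the apex value leaves a locally determined set of the pentagon. -/
theorem IsLocallyDetermined.card_filter_apex_sq_le {S : Finset (Fin 6 → α)}
    (hS : IsLocallyDetermined (pentagonApex N) S) (c : α) :
    #{x ∈ S | x 5 = c} ^ 2 ≤ Fintype.card α ^ 5 := by
  set T := {x ∈ S | x 5 = c}
  have hT : ∀ {x}, x ∈ T → x ∈ S ∧ x 5 = c := mem_filter.1
  have hinj : Set.InjOn (fun x i => x (Fin.castSucc i)) (T : Set (Fin 6 → α)) := by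
    intro x hx y hy hxy
    funext v
    rcases Fin.eq_castSucc_or_eq_last v with ⟨i, rfl⟩ | rfl
    · exact congrFun hxy i
    · exact (hT hx).2.trans (hT hy).2.symm
  rw [← card_image_of_injOn hinj]
  refine IsLocallyDetermined.card_sq_le_of_cycleGraph_five ?_
  simp only [IsLocallyDetermined, mem_image, forall_exists_index, and_imp]
  rintro i _ x hx rfl _ y hy rfl hxy
  refine hS i.castSucc x (hT hx).1 y (hT hy).1 fun u hu => ?_
  rcases Fin.eq_castSucc_or_eq_last u with ⟨j, rfl⟩ | rfl
  · exact hxy j (pentagonApex_castSucc_adj_castSucc.1 hu)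
  · exact (hT hx).2.trans (hT hy).2.symm

theorem guessing_pentagonApex_le_seven_halves {q : ℕ} (hq : 2 ≤ q) :
    guessing (pentagonApex N) q ≤ 7 / 2 := by
  have h := guessing_le_of_forall_card_pow_le (G := pentagonApex N) (k := 2) (m := 7) hq two_pos
    fun S hS => ?_
  · exact_mod_cast h
  calc #S ^ 2 = (∑ c : Fin q, #{x ∈ S | x 5 = c}) ^ 2 := by
        rw [card_eq_sum_card_fiberwise fun x _ => mem_univ (x 5)]
    _ ≤ #(univ : Finset (Fin q)) * ∑ c : Fin q, #{x ∈ S | x 5 = c} ^ 2 := sq_sum_le_card_mul_sum_sq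
    _ ≤ q * ∑ _c : Fin q, q ^ 5 := by
        rw [card_univ, Fintype.card_fin]
        exact Nat.mul_le_mul_left q
          (sum_le_sum fun c _ => by simpa using hS.card_filter_apex_sq_le c)
    _ = q ^ 7 := by simp; ring

theorem guessing_pentagonApex_empty_le_five_halves {q : ℕ} (hq : 2 ≤ q) :
    guessing (pentagonApex ∅) q ≤ 5 / 2 := by
  have h := guessing_le_of_forall_card_pow_le (G := pentagonApex ∅) (k := 2) (m := 5) hq two_pos
    fun S hS => ?_
  · exact_mod_cast h
  rcases S.eq_empty_or_nonempty with rfl | ⟨x₀, hx₀⟩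
  · simp
  have hconst : {x ∈ S | x 5 = x₀ 5} = S := filter_true_of_mem fun x hx =>
    hS 5 x hx x₀ hx₀ fun u hu => absurd hu (by simp [pentagonApex])
  simpa [hconst] using hS.card_filter_apex_sq_le (x₀ 5)

theorem pentagonApex_isIndepSet {a : Fin 5} (ha : a ∉ N) (ha₂ : a + 2 ∉ N) :
    (pentagonApex N).IsIndepSet ↑({a.castSucc, (a + 2).castSucc, 5} : Finset (Fin 6)) := by
  have hcyc : ∀ b : Fin 5, ¬ (cycleGraph 5).Adj b (b + 2) ∧ ¬ (cycleGraph 5).Adj (b + 2) b := by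
    decide
  intro u hu v hv huv hadj
  simp only [coe_insert, coe_singleton, Set.mem_insert_iff, Set.mem_singleton_iff] at hu hv
  rcases hu with rfl | rfl | rfl <;> rcases hv with rfl | rfl | rfl <;>
    simp_all [pentagonApex_castSucc_adj_castSucc, pentagonApex_apex_adj_castSucc,
      pentagonApex_castSucc_adj_apex]

theorem guessing_pentagonApex_le_three {q : ℕ} (hq : 2 ≤ q) {a : Fin 5} (ha : a ∉ N)
    (ha₂ : a + 2 ∉ N) : guessing (pentagonApex N) q ≤ 3 := by
  have hs : ∀ b : Fin 5, #({b.castSucc, (b + 2).castSucc, 5} : Finset (Fin 6))ᶜ = 3 := by decide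
  have h := guessing_le_of_forall_card_pow_le (G := pentagonApex N) (k := 1) (m := 3) hq one_pos
    fun S hS => by
      rw [pow_one]
      refine (hS.card_le_of_isIndepSet (pentagonApex_isIndepSet ha ha₂)).trans_eq ?_
      rw [hs a, Fintype.card_fin]
  simpa using h

theorem graphEntropy_pentagonApex_empty : graphEntropy (pentagonApex ∅) = 5 / 2 := by
  have hm : #(univ.image isolatedApexCover) = 7 := by decide
  refine graphEntropy_eq_of_guessing (q₀ := Fintype.card (Fin 2) ^ 2) (by simp)
    (fun q hq => guessing_pentagonApex_empty_le_five_halves hq) ?_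
  have h := isCliqueCover_isolatedApexCover.le_guessing (A := Fin 2) two_pos
  rw [hm] at h
  norm_num at h ⊢
  exact h

theorem graphEntropy_pentagonApex_of_consecutive {i : Fin 5}
    (hi : i ∈ N ∧ i + 1 ∈ N ∧ i + 2 ∈ N) : graphEntropy (pentagonApex N) = 7 / 2 := by
  have hm : ∀ i, #(univ.image (triangleCover i)) = 5 := by decide
  refine graphEntropy_eq_of_guessing (q₀ := Fintype.card (Fin 2) ^ 2) (by simp)
    (fun q hq => guessing_pentagonApex_le_seven_halves hq) ?_
  have hsub : {i, i + 1, i + 2} ⊆ N := by simp [insert_subset_iff, hi]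
  have h := ((isCliqueCover_triangleCover i).mono (pentagonApex_mono hsub)).le_guessing
    (A := Fin 2) two_pos
  rw [hm] at h
  norm_num at h ⊢
  exact h

theorem graphEntropy_pentagonApex_of_not_consecutive (hN : N.Nonempty)
    (hcons : ∀ i, ¬ (i ∈ N ∧ i + 1 ∈ N ∧ i + 2 ∈ N)) : graphEntropy (pentagonApex N) = 3 := by
  have hgap : ∀ N : Finset (Fin 5), (∀ i, ¬ (i ∈ N ∧ i + 1 ∈ N ∧ i + 2 ∈ N)) →
      ∃ a, a ∉ N ∧ a + 2 ∉ N := by decide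
  obtain ⟨a, ha, ha₂⟩ := hgap N hcons
  obtain ⟨j, hj⟩ := hN
  have hm : ∀ j : Fin 5, #(univ.image (matchingCover j)) = 3 := by decide
  refine graphEntropy_eq_of_guessing (q₀ := Fintype.card (Fin 2) ^ 1) (by simp)
    (fun q hq => guessing_pentagonApex_le_three hq ha ha₂) ?_
  have hsub : {j} ⊆ N := by simpa using hj
  have h := ((isCliqueCover_matchingCover j).mono (pentagonApex_mono hsub)).le_guessing
    (A := Fin 2) one_pos
  rw [hm] at h
  norm_num at h ⊢
  exact h

end Pentagon

theorem exists_consecutive_iff {P : Fin 6 → Prop} :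
    (∃ i j l : Fin 6, i.val < 5 ∧ j.val < 5 ∧ l.val < 5 ∧
      (i.val + 1) % 5 = j.val ∧ (j.val + 1) % 5 = l.val ∧ P i ∧ P j ∧ P l) ↔
    ∃ i : Fin 5, P i.castSucc ∧ P (i + 1).castSucc ∧ P (i + 2).castSucc := by
  constructor
  · rintro ⟨i, j, l, hi, hj, hl, hij, hjl, hPi, hPj, hPl⟩
    have e₁ : ((⟨i, hi⟩ : Fin 5) + 1).castSucc = j := Fin.ext (by simp [Fin.val_add]; omega)
    have e₂ : ((⟨i, hi⟩ : Fin 5) + 2).castSucc = l := Fin.ext (by simp [Fin.val_add]; omega)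
    exact ⟨⟨i, hi⟩, hPi, by rwa [e₁], by rwa [e₂]⟩
  · rintro ⟨i, hP₀, hP₁, hP₂⟩
    refine ⟨_, _, _, by simp, by simp, by simp, ?_, ?_, hP₀, hP₁, hP₂⟩ <;>
      simp [Fin.val_add]

/-- Vertices `v₁,…,v₆` are `0,…,5 : Fin 6`. -/
theorem entropy_pentagon_plus_vertex_general (G : SimpleGraph (Fin 6))
    (hcycle : ∀ i j : Fin 6, i.val < 5 → j.val < 5 →
      (G.Adj i j ↔ (i.val + 1) % 5 = j.val ∨ (j.val + 1) % 5 = i.val)) :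
    ((∀ j, ¬ G.Adj 5 j) → graphEntropy G = 5/2) ∧
    ((∃ i j l : Fin 6, i.val < 5 ∧ j.val < 5 ∧ l.val < 5 ∧
        (i.val + 1) % 5 = j.val ∧ (j.val + 1) % 5 = l.val ∧
        G.Adj 5 i ∧ G.Adj 5 j ∧ G.Adj 5 l) → graphEntropy G = 7/2) ∧
    ((∃ j, G.Adj 5 j) →
      ¬ (∃ i j l : Fin 6, i.val < 5 ∧ j.val < 5 ∧ l.val < 5 ∧
        (i.val + 1) % 5 = j.val ∧ (j.val + 1) % 5 = l.val ∧
        G.Adj 5 i ∧ G.Adj 5 j ∧ G.Adj 5 l) → graphEntropy G = 3) := by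
  classical
  set N : Finset (Fin 5) := {i | G.Adj 5 i.castSucc}
  have hG : G = pentagonApex N := eq_pentagonApex hcycle
  have hcons : (∃ i j l : Fin 6, i.val < 5 ∧ j.val < 5 ∧ l.val < 5 ∧
      (i.val + 1) % 5 = j.val ∧ (j.val + 1) % 5 = l.val ∧
      G.Adj 5 i ∧ G.Adj 5 j ∧ G.Adj 5 l) ↔ ∃ i, i ∈ N ∧ i + 1 ∈ N ∧ i + 2 ∈ N := by
    simp only [exists_consecutive_iff, N, mem_filter, mem_univ, true_and]
  rw [hcons, hG]
  refine ⟨fun hiso => ?_, fun ⟨i, hi⟩ => graphEntropy_pentagonApex_of_consecutive hi,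
    fun ⟨j, hj⟩ hno => graphEntropy_pentagonApex_of_not_consecutive ?_ fun i hi => hno ⟨i, hi⟩⟩
  · rw [eq_empty_of_forall_notMem fun i hi => hiso _ (pentagonApex_apex_adj_castSucc.2 hi)]
    exact graphEntropy_pentagonApex_empty
  · rcases Fin.eq_castSucc_or_eq_last j with ⟨i, rfl⟩ | rfl
    · exact ⟨i, pentagonApex_apex_adj_castSucc.1 hj⟩
    · exact absurd hj (SimpleGraph.irrefl _)

/-- Lemma on the pentagon plus a sixth vertex. Vertices `v₁,…,v₆` are `0,…,5 : Fin 6`;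
the subgraph induced on `{0,…,4}` is the 5-cycle `0-1-2-3-4-0` (all other edges being
incident to `5`). Then `H(G) = 5/2` if `5` is isolated, `H(G) = 7/2` if the neighbourhood
of `5` contains three consecutive vertices of the 5-cycle, and `H(G) = 3` otherwise. -/
theorem entropy_pentagon_plus_vertex (G : SimpleGraph (Fin 6))
    (hcycle : ∀ i j : Fin 6, i.val < 5 → j.val < 5 →
      (G.Adj i j ↔ (i.val + 1) % 5 = j.val ∨ (j.val + 1) % 5 = i.val))
    (hinc : ∀ i j : Fin 6, G.Adj i j → (i.val < 5 ∧ j.val < 5) ∨ i = 5 ∨ j = 5) :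
    ((∀ j, ¬ G.Adj 5 j) → graphEntropy G = 5/2) ∧
    ((∃ i j l : Fin 6, i.val < 5 ∧ j.val < 5 ∧ l.val < 5 ∧
        (i.val + 1) % 5 = j.val ∧ (j.val + 1) % 5 = l.val ∧
        G.Adj 5 i ∧ G.Adj 5 j ∧ G.Adj 5 l) → graphEntropy G = 7/2) ∧
    ((∃ j, G.Adj 5 j) →
      ¬ (∃ i j l : Fin 6, i.val < 5 ∧ j.val < 5 ∧ l.val < 5 ∧
        (i.val + 1) % 5 = j.val ∧ (j.val + 1) % 5 = l.val ∧
        G.Adj 5 i ∧ G.Adj 5 j ∧ G.Adj 5 l) → graphEntropy G = 3) :=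
  entropy_pentagon_plus_vertex_general G hcycle

end
end
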